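/- arXiv:1302.2358 — 8 statements merged into one kernel-verified Lean document; each statement's English description precedes it below -/
import Mathlib

section
/- Let R be a commutative ring, M = R^n, and N a submodule of M. Then the auxiliary radical α(N) := {f ∈ M : f ⊗ f + Σᵢ sᵢ ⊗ sᵢ ∈ M ⊗ N + N ⊗ M for some finitely many sᵢ ∈ M} is a submodule of M containing N. -/
open TensorProduct

/-- The submodule `M ⊗ N + N ⊗ M` of `M ⊗[R] M` (for `M = R^n`), where `N` is
given by a subset `S` of `M`: it is spanned by pure tensors with one factor in `S`. -/
def tensMN {R : Type*} [CommRing R] {n : ℕ} (S : Set (Fin n → R)) :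
    Submodule R ((Fin n → R) ⊗[R] (Fin n → R)) :=
  Submodule.span R
    ({x | ∃ a : Fin n → R, ∃ b ∈ S, x = a ⊗ₜ[R] b} ∪
     {x | ∃ b ∈ S, ∃ a : Fin n → R, x = b ⊗ₜ[R] a})

/-- A submodule `N` of `M = R^n` is *real* if `∑ mᵢ ⊗ mᵢ ∈ M ⊗ N + N ⊗ M` implies
all `mᵢ ∈ N`. -/
def IsRealSubmodule {R : Type*} [CommRing R] {n : ℕ} (N : Submodule R (Fin n → R)) : Prop :=
  ∀ (K : ℕ) (m : Fin K → (Fin n → R)),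
    (∑ i, m i ⊗ₜ[R] m i) ∈ tensMN (N : Set (Fin n → R)) → ∀ i, m i ∈ N

/-- The real radical of a submodule of `R^n`: the smallest real submodule containing it. -/
noncomputable def realRadicalSub {R : Type*} [CommRing R] {n : ℕ}
    (N : Submodule R (Fin n → R)) : Submodule R (Fin n → R) :=
  sInf {P | IsRealSubmodule P ∧ N ≤ P}

/-- The auxiliary radical `α(S)` of a subset of `R^n`. -/
def auxRad {R : Type*} [CommRing R] {n : ℕ} (S : Set (Fin n → R)) : Set (Fin n → R) :=
  {f | ∃ (L : ℕ) (s : Fin L → (Fin n → R)),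
    f ⊗ₜ[R] f + ∑ i, s i ⊗ₜ[R] s i ∈ tensMN S}

/-!
The sums of squares `∑ sᵢ ⊗ sᵢ` form an additive submonoid of `M ⊗ M` that is stable under
multiplication by squares `r * r`. Closure of `α(S)` under scalars then comes from
`(r • f) ⊗ (r • f) = (r * r) • (f ⊗ f)`, and closure under addition from the parallelogram law
`(f + g) ⊗ (f + g) + (f - g) ⊗ (f - g) = 2 • f ⊗ f + 2 • g ⊗ g`, whose extra square
`(f - g) ⊗ (f - g)` is absorbed into the sum of squares.
-/

namespace TensorProduct

variable {R M : Type*} [CommRing R] [AddCommGroup M] [Module R M]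

variable (R M) in
def sumSqSubmonoid : AddSubmonoid (M ⊗[R] M) :=
  AddSubmonoid.closure {x | ∃ m : M, m ⊗ₜ[R] m = x}

theorem tmul_self_mem_sumSqSubmonoid (m : M) : m ⊗ₜ[R] m ∈ sumSqSubmonoid R M :=
  AddSubmonoid.subset_closure ⟨m, rfl⟩

theorem sum_tmul_self_mem_sumSqSubmonoid {L : ℕ} (s : Fin L → M) :
    ∑ i, s i ⊗ₜ[R] s i ∈ sumSqSubmonoid R M :=
  sum_mem fun i _ => tmul_self_mem_sumSqSubmonoid (s i)

theorem exists_sum_tmul_self_eq_of_mem_sumSqSubmonoid {q : M ⊗[R] M}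
    (hq : q ∈ sumSqSubmonoid R M) : ∃ (L : ℕ) (s : Fin L → M), ∑ i, s i ⊗ₜ[R] s i = q := by
  induction hq using AddSubmonoid.closure_induction with
  | mem x hx =>
    obtain ⟨m, rfl⟩ := hx
    exact ⟨1, fun _ => m, by simp⟩
  | zero => exact ⟨0, Fin.elim0, by simp⟩
  | add x y _ _ hx hy =>
    obtain ⟨L₁, s₁, rfl⟩ := hx
    obtain ⟨L₂, s₂, rfl⟩ := hy
    exact ⟨L₁ + L₂, Fin.append s₁ s₂, by simp [Fin.sum_univ_add]⟩

theorem mul_self_smul_mem_sumSqSubmonoid (r : R) {q : M ⊗[R] M}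
    (hq : q ∈ sumSqSubmonoid R M) : (r * r) • q ∈ sumSqSubmonoid R M := by
  induction hq using AddSubmonoid.closure_induction with
  | mem x hx =>
    obtain ⟨m, rfl⟩ := hx
    rw [← smul_tmul_smul]
    exact tmul_self_mem_sumSqSubmonoid (r • m)
  | zero => simp
  | add x y _ _ hx hy => simpa only [smul_add] using add_mem hx hy

theorem add_tmul_self_add_sub_tmul_self (f g : M) :
    (f + g) ⊗ₜ[R] (f + g) + (f - g) ⊗ₜ[R] (f - g) = 2 • (f ⊗ₜ[R] f) + 2 • (g ⊗ₜ[R] g) := by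
  simp only [add_tmul, tmul_add, sub_tmul, tmul_sub, two_smul]
  abel

end TensorProduct

section AuxRad

variable {R : Type*} [CommRing R] {n : ℕ} {S : Set (Fin n → R)}

theorem mem_auxRad_iff {f : Fin n → R} :
    f ∈ auxRad S ↔ ∃ q ∈ sumSqSubmonoid R (Fin n → R), f ⊗ₜ[R] f + q ∈ tensMN S := by
  constructor
  · rintro ⟨L, s, h⟩
    exact ⟨_, sum_tmul_self_mem_sumSqSubmonoid s, h⟩
  · rintro ⟨q, hq, h⟩
    obtain ⟨L, s, rfl⟩ := exists_sum_tmul_self_eq_of_mem_sumSqSubmonoid hq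
    exact ⟨L, s, h⟩

theorem subset_auxRad : S ⊆ auxRad S := fun f hf =>
  ⟨0, Fin.elim0, by
    simp only [Finset.univ_eq_empty, Finset.sum_empty, add_zero]
    exact Submodule.subset_span (Or.inl ⟨f, f, hf, rfl⟩)⟩

theorem zero_mem_auxRad : (0 : Fin n → R) ∈ auxRad S :=
  ⟨0, Fin.elim0, by simp⟩

theorem add_mem_auxRad {f g : Fin n → R} (hf : f ∈ auxRad S) (hg : g ∈ auxRad S) :
    f + g ∈ auxRad S := by
  rw [mem_auxRad_iff] at hf hg ⊢
  obtain ⟨qf, hqf, hf⟩ := hf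
  obtain ⟨qg, hqg, hg⟩ := hg
  refine ⟨(f - g) ⊗ₜ[R] (f - g) + (2 • qf + 2 • qg),
    add_mem (tmul_self_mem_sumSqSubmonoid _) (add_mem (nsmul_mem hqf 2) (nsmul_mem hqg 2)), ?_⟩
  have hpar : (f + g) ⊗ₜ[R] (f + g) + ((f - g) ⊗ₜ[R] (f - g) + (2 • qf + 2 • qg)) =
      2 • (f ⊗ₜ[R] f + qf) + 2 • (g ⊗ₜ[R] g + qg) := by
    rw [← add_assoc, add_tmul_self_add_sub_tmul_self, smul_add, smul_add]
    abel
  rw [hpar]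
  exact add_mem (nsmul_mem hf 2) (nsmul_mem hg 2)

theorem smul_mem_auxRad (r : R) {f : Fin n → R} (hf : f ∈ auxRad S) : r • f ∈ auxRad S := by
  rw [mem_auxRad_iff] at hf ⊢
  obtain ⟨q, hq, h⟩ := hf
  refine ⟨(r * r) • q, mul_self_smul_mem_sumSqSubmonoid r hq, ?_⟩
  have hscale : (r • f) ⊗ₜ[R] (r • f) + (r * r) • q = (r * r) • (f ⊗ₜ[R] f + q) := by
    rw [smul_add, smul_tmul_smul]
  rw [hscale]
  exact Submodule.smul_mem _ _ h

variable (S) in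
def auxRadSubmodule : Submodule R (Fin n → R) where
  carrier := auxRad S
  add_mem' := add_mem_auxRad
  zero_mem' := zero_mem_auxRad
  smul_mem' := smul_mem_auxRad

end AuxRad

theorem stmt2 {R : Type*} [CommRing R] {n : ℕ} (N : Submodule R (Fin n → R)) :
    ∃ P : Submodule R (Fin n → R),
      (P : Set (Fin n → R)) = auxRad (N : Set (Fin n → R)) ∧ N ≤ P :=
  ⟨auxRadSubmodule N, rfl, subset_auxRad⟩
end

section
/- Let R be a commutative ring, M = R^n, and N a submodule of M. Then the real radical of N (the smallest real submodule of M containing N) equals the union of the increasing chain N ⊆ α(N) ⊆ α(α(N)) ⊆ ⋯, where α is the auxiliary radical operation. -/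
open TensorProduct

section Aux

variable {R : Type*} [CommRing R] {n : ℕ}

lemma tensMN_mono {S T : Set (Fin n → R)} (h : S ⊆ T) : tensMN S ≤ tensMN T := by
  apply Submodule.span_mono
  rintro x (⟨a, b, hb, rfl⟩ | ⟨b, hb, a, rfl⟩)
  · exact Or.inl ⟨a, b, h hb, rfl⟩
  · exact Or.inr ⟨b, h hb, a, rfl⟩

lemma tmul_mem_tensMN {S : Set (Fin n → R)} {a b : Fin n → R} (hb : b ∈ S) :
    a ⊗ₜ[R] b ∈ tensMN S :=
  Submodule.subset_span (Or.inl ⟨a, b, hb, rfl⟩)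

lemma subset_auxRad_s3 (S : Set (Fin n → R)) : S ⊆ auxRad S := fun f hf =>
  ⟨0, Fin.elim0, by simpa using tmul_mem_tensMN hf⟩

lemma auxRad_mono {S T : Set (Fin n → R)} (h : S ⊆ T) : auxRad S ⊆ auxRad T :=
  fun _ ⟨L, s, hs⟩ => ⟨L, s, tensMN_mono h hs⟩

lemma sq_append {L L' : ℕ} (s : Fin L → (Fin n → R)) (s' : Fin L' → (Fin n → R)) :
    ∑ i, Fin.append s s' i ⊗ₜ[R] Fin.append s s' i
      = (∑ i, s i ⊗ₜ[R] s i) + ∑ i, s' i ⊗ₜ[R] s' i := by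
  rw [Fin.sum_univ_add]
  simp

lemma auxRad_zero_mem (P : Submodule R (Fin n → R)) :
    (0 : Fin n → R) ∈ auxRad (P : Set (Fin n → R)) :=
  subset_auxRad_s3 _ P.zero_mem

lemma auxRad_smul_mem (P : Submodule R (Fin n → R)) (r : R) {f : Fin n → R}
    (hf : f ∈ auxRad (P : Set (Fin n → R))) :
    r • f ∈ auxRad (P : Set (Fin n → R)) := by
  obtain ⟨L, s, hs⟩ := hf
  refine ⟨L, fun i => r • s i, ?_⟩
  have key : (r • f) ⊗ₜ[R] (r • f) + ∑ i, (r • s i) ⊗ₜ[R] (r • s i)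
      = (r * r) • (f ⊗ₜ[R] f + ∑ i, s i ⊗ₜ[R] s i) := by
    simp [TensorProduct.smul_tmul', TensorProduct.tmul_smul, smul_smul,
      Finset.smul_sum, smul_add]
  rw [key]
  exact Submodule.smul_mem _ _ hs

lemma auxRad_add_mem (P : Submodule R (Fin n → R)) {f g : Fin n → R}
    (hf : f ∈ auxRad (P : Set (Fin n → R))) (hg : g ∈ auxRad (P : Set (Fin n → R))) :
    f + g ∈ auxRad (P : Set (Fin n → R)) := by
  obtain ⟨L, s, hs⟩ := hf
  obtain ⟨L', s', hs'⟩ := hg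
  refine ⟨(L + L) + (L' + L') + 1,
    Fin.cons (f - g) (Fin.append (Fin.append s s) (Fin.append s' s')), ?_⟩
  have key : (f + g) ⊗ₜ[R] (f + g) +
      ∑ i, (Fin.cons (f - g) (Fin.append (Fin.append s s) (Fin.append s' s'))
              : Fin ((L + L) + (L' + L') + 1) → (Fin n → R)) i ⊗ₜ[R]
            (Fin.cons (f - g) (Fin.append (Fin.append s s) (Fin.append s' s'))) i
      = ((f ⊗ₜ[R] f + ∑ i, s i ⊗ₜ[R] s i) + (f ⊗ₜ[R] f + ∑ i, s i ⊗ₜ[R] s i))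
        + ((g ⊗ₜ[R] g + ∑ i, s' i ⊗ₜ[R] s' i) + (g ⊗ₜ[R] g + ∑ i, s' i ⊗ₜ[R] s' i)) := by
    rw [Fin.sum_univ_succ]
    simp only [Fin.cons_zero, Fin.cons_succ]
    rw [sq_append, sq_append, sq_append]
    simp only [TensorProduct.tmul_add, TensorProduct.add_tmul,
      TensorProduct.tmul_sub, TensorProduct.sub_tmul]
    abel
  rw [key]
  exact Submodule.add_mem _ (Submodule.add_mem _ hs hs) (Submodule.add_mem _ hs' hs')

/-- `α` of (the underlying set of) a submodule, as a submodule. -/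
def auxSub (P : Submodule R (Fin n → R)) : Submodule R (Fin n → R) where
  carrier := auxRad (P : Set (Fin n → R))
  zero_mem' := auxRad_zero_mem P
  add_mem' := auxRad_add_mem P
  smul_mem' := auxRad_smul_mem P

lemma iter_eq (N : Submodule R (Fin n → R)) :
    ∀ k, ∃ P : Submodule R (Fin n → R), (P : Set (Fin n → R)) = auxRad^[k] (N : Set (Fin n → R))
  | 0 => ⟨N, rfl⟩
  | (k+1) => by
    obtain ⟨P, hP⟩ := iter_eq N k
    refine ⟨auxSub P, ?_⟩
    rw [Function.iterate_succ_apply', ← hP]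
    rfl

lemma iter_mono (N : Submodule R (Fin n → R)) :
    Monotone fun k => auxRad^[k] (N : Set (Fin n → R)) :=
  monotone_nat_of_le_succ fun k => by
    rw [Function.iterate_succ_apply']
    exact subset_auxRad_s3 _

/-- The union of the chain `N ⊆ α(N) ⊆ α(α(N)) ⊆ ⋯`, as a submodule. -/
def chainSup (N : Submodule R (Fin n → R)) : Submodule R (Fin n → R) where
  carrier := ⋃ k, auxRad^[k] (N : Set (Fin n → R))
  zero_mem' := Set.mem_iUnion.2 ⟨0, N.zero_mem⟩
  add_mem' := by
    rintro a b ha hb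
    obtain ⟨k, hk⟩ := Set.mem_iUnion.1 ha
    obtain ⟨l, hl⟩ := Set.mem_iUnion.1 hb
    obtain ⟨P, hP⟩ := iter_eq N (max k l)
    refine Set.mem_iUnion.2 ⟨max k l, ?_⟩
    have ha' : a ∈ (P : Set (Fin n → R)) := hP ▸ iter_mono N (le_max_left k l) hk
    have hb' : b ∈ (P : Set (Fin n → R)) := hP ▸ iter_mono N (le_max_right k l) hl
    rw [← hP]
    exact P.add_mem ha' hb'
  smul_mem' := by
    rintro r a ha
    obtain ⟨k, hk⟩ := Set.mem_iUnion.1 ha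
    obtain ⟨P, hP⟩ := iter_eq N k
    refine Set.mem_iUnion.2 ⟨k, ?_⟩
    have ha' : a ∈ (P : Set (Fin n → R)) := hP ▸ hk
    rw [← hP]
    exact P.smul_mem r ha'

lemma tensMN_iUnion_chain (N : Submodule R (Fin n → R)) :
    tensMN (⋃ k, auxRad^[k] (N : Set (Fin n → R)))
      = ⨆ k, tensMN (auxRad^[k] (N : Set (Fin n → R))) := by
  unfold tensMN
  rw [← Submodule.span_iUnion]
  congr 1
  ext x
  simp only [Set.mem_iUnion, Set.mem_union, Set.mem_setOf_eq]
  constructor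
  · rintro (⟨a, b, hb, rfl⟩ | ⟨b, hb, a, rfl⟩)
    · obtain ⟨k, hbk⟩ := hb
      exact ⟨k, Or.inl ⟨a, b, hbk, rfl⟩⟩
    · obtain ⟨k, hbk⟩ := hb
      exact ⟨k, Or.inr ⟨b, hbk, a, rfl⟩⟩
  · rintro ⟨k, (⟨a, b, hb, rfl⟩ | ⟨b, hb, a, rfl⟩)⟩
    · exact Or.inl ⟨a, b, ⟨k, hb⟩, rfl⟩
    · exact Or.inr ⟨b, ⟨k, hb⟩, a, rfl⟩

lemma chainSup_real (N : Submodule R (Fin n → R)) : IsRealSubmodule (chainSup N) := by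
  intro K m hm
  have hco : ((chainSup N : Submodule R (Fin n → R)) : Set (Fin n → R))
      = ⋃ k, auxRad^[k] (N : Set (Fin n → R)) := rfl
  rw [hco, tensMN_iUnion_chain] at hm
  have hdir : Directed (· ≤ ·) fun k => tensMN (auxRad^[k] (N : Set (Fin n → R))) :=
    Monotone.directed_le fun k l hkl => tensMN_mono (iter_mono N hkl)
  obtain ⟨k, hk⟩ := (Submodule.mem_iSup_of_directed _ hdir).1 hm
  intro i
  show m i ∈ ⋃ k, auxRad^[k] (N : Set (Fin n → R))
  refine Set.mem_iUnion.2 ⟨k + 1, ?_⟩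
  rw [Function.iterate_succ_apply']
  refine ⟨K, Function.update m i 0, ?_⟩
  have key : m i ⊗ₜ[R] m i + ∑ j, Function.update m i 0 j ⊗ₜ[R] Function.update m i 0 j
      = ∑ j, m j ⊗ₜ[R] m j := by
    have h1 : ∀ j, Function.update m i 0 j ⊗ₜ[R] Function.update m i 0 j
        = Function.update (fun j => m j ⊗ₜ[R] m j) i 0 j := by
      intro j
      by_cases h : j = i
      · subst h; simp
      · simp [Function.update_of_ne h]
    simp_rw [h1]
    rw [Finset.sum_update_of_mem (Finset.mem_univ i), zero_add,
      Finset.sdiff_singleton_eq_erase]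
    exact Finset.add_sum_erase _ (fun j => m j ⊗ₜ[R] m j) (Finset.mem_univ i)
  rw [key]
  exact hk

lemma iter_le_real (N P : Submodule R (Fin n → R)) (hP : IsRealSubmodule P) (hNP : N ≤ P) :
    ∀ k, auxRad^[k] (N : Set (Fin n → R)) ⊆ (P : Set (Fin n → R))
  | 0 => fun x hx => hNP hx
  | (k+1) => by
    rw [Function.iterate_succ_apply']
    intro f hf
    obtain ⟨L, s, hs⟩ := auxRad_mono (iter_le_real N P hP hNP k) hf
    have hmem : (∑ i : Fin (L + 1), Fin.cons f s i ⊗ₜ[R] Fin.cons f s i)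
        ∈ tensMN (P : Set (Fin n → R)) := by
      rw [Fin.sum_univ_succ]
      simpa using hs
    exact hP (L + 1) (Fin.cons f s) hmem 0

end Aux

/-- The real radical of a submodule `N` of `R^n` equals the union of the chain
`N ⊆ α(N) ⊆ α(α(N)) ⊆ ⋯`. -/
theorem stmt3 {R : Type*} [CommRing R] {n : ℕ} (N : Submodule R (Fin n → R)) :
    (realRadicalSub N : Set (Fin n → R)) = ⋃ k : ℕ, auxRad^[k] (N : Set (Fin n → R)) := by
  have h1 : realRadicalSub N = chainSup N := by
    apply le_antisymm
    · exact sInf_le ⟨chainSup_real N, fun x hx => Set.mem_iUnion.2 ⟨0, hx⟩⟩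
    · refine le_sInf ?_
      rintro P ⟨hP, hNP⟩ x hx
      obtain ⟨k, hk⟩ := Set.mem_iUnion.1 hx
      exact iter_le_real N P hP hNP k hk
  rw [h1]
  rfl
end

section
/- Let R be a finitely generated commutative unital ℝ-algebra and N a submodule of M = R^n. Then the real saturation of N, namely {f ∈ M : ⟨φⁿ(f), u⟩ = 0 for all φ ∈ V_ℝ(R) and u ∈ ℝⁿ such that ⟨φⁿ(g), u⟩ = 0 for every g ∈ N}, is a real submodule of M containing N. In particular, the real radical of N is contained in the real saturation of N. -/
open TensorProduct

/-- The real saturation of a subset of `R^n`, for an `ℝ`-algebra `R`. -/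
def realSat {R : Type*} [CommRing R] [Algebra ℝ R] {n : ℕ} (S : Set (Fin n → R)) :
    Set (Fin n → R) :=
  {f | ∀ (φ : R →ₐ[ℝ] ℝ) (u : Fin n → ℝ),
    (∀ g ∈ S, ∑ j, φ (g j) * u j = 0) → ∑ j, φ (f j) * u j = 0}

lemma auxB {R : Type*} [CommRing R] [Algebra ℝ R] {n : ℕ}
    (φ : R →ₐ[ℝ] ℝ) (u : Fin n → ℝ) (S : Set (Fin n → R))
    (hS : ∀ g ∈ S, ∑ j, φ (g j) * u j = 0)
    (K : ℕ) (m : Fin K → (Fin n → R))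
    (hm : (∑ i, m i ⊗ₜ[R] m i) ∈ tensMN S) :
    ∀ i, ∑ j, φ (m i j) * u j = 0 := by
  letI : Algebra R ℝ := φ.toRingHom.toAlgebra
  have hsmul : ∀ (r : R) (x : ℝ), r • x = φ r * x := fun r x => rfl
  let ℓ : (Fin n → R) →ₗ[R] ℝ :=
    { toFun := fun f => ∑ j, φ (f j) * u j
      map_add' := by
        intro f g
        simp [map_add, add_mul, Finset.sum_add_distrib]
      map_smul' := by
        intro r f
        simp [hsmul, Finset.mul_sum, mul_assoc, map_mul] }
  let B : ((Fin n → R) ⊗[R] (Fin n → R)) →ₗ[R] ℝ :=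
    (LinearMap.mul' R ℝ).comp (TensorProduct.map ℓ ℓ)
  have hker : tensMN S ≤ LinearMap.ker B := by
    rw [tensMN, Submodule.span_le]
    rintro y (⟨a, b, hb, rfl⟩ | ⟨b, hb, a, rfl⟩) <;>
      simp [B, LinearMap.mul'_apply, ℓ, hS b hb]
  have h0 : ∑ i, (ℓ (m i)) ^ 2 = 0 := by
    have := hker hm
    simp only [LinearMap.mem_ker, map_sum] at this
    simpa [B, LinearMap.mul'_apply, sq] using this
  intro i
  have h1 := (Finset.sum_eq_zero_iff_of_nonneg
    (fun i _ => sq_nonneg (ℓ (m i)))).mp h0 i (Finset.mem_univ i)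
  have h2 : ℓ (m i) = 0 := by
    have := sq_eq_zero_iff.mp h1
    exact this
  simpa [ℓ] using h2

/-- The real saturation of a submodule `N ≤ R^n` is a real submodule containing `N`;
in particular the real radical of `N` is contained in the real saturation. -/
theorem stmt5 {R : Type*} [CommRing R] [Algebra ℝ R] [Algebra.FiniteType ℝ R]
    {n : ℕ} (N : Submodule R (Fin n → R)) :
    (∃ P : Submodule R (Fin n → R),
        (P : Set (Fin n → R)) = realSat (N : Set (Fin n → R)) ∧
        IsRealSubmodule P ∧ N ≤ P) ∧
    (realRadicalSub N : Set (Fin n → R)) ⊆ realSat (N : Set (Fin n → R)) := by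
  classical
  let P : Submodule R (Fin n → R) :=
    { carrier := realSat (N : Set (Fin n → R))
      zero_mem' := by intro φ u h; simp
      add_mem' := by
        intro a b ha hb φ u h
        have h1 := ha φ u h
        have h2 := hb φ u h
        simp [Pi.add_apply, map_add, add_mul, Finset.sum_add_distrib, h1, h2]
      smul_mem' := by
        intro r f hf φ u h
        have h1 := hf φ u h
        simp [Pi.smul_apply, smul_eq_mul, map_mul, mul_assoc, ← Finset.mul_sum, h1] }
  have hNsat : N ≤ P := fun f hf φ u h => h f hf
  have hreal : IsRealSubmodule P := by
    intro K m hm i φ u h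
    exact auxB φ u _ (fun g hg => (hg : g ∈ realSat (N : Set (Fin n → R))) φ u h) K m hm i
  refine ⟨⟨P, rfl, hreal, hNsat⟩, ?_⟩
  intro f hf
  exact (sInf_le ⟨hreal, hNsat⟩ : realRadicalSub N ≤ P) hf
end

section
/- Let R be a commutative ring, M = R^n, M' = R^(n-1), and ι : M' → M the embedding into the last n−1 coordinates. If P is a real submodule of M, then ι⁻¹(P) is a real submodule of M'. -/
open TensorProduct

/-- The embedding `R^n → R^(n+1)` into the last `n` coordinates. -/
def iotaL {R : Type*} [CommRing R] {n : ℕ} : (Fin n → R) →ₗ[R] (Fin (n + 1) → R) where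
  toFun v := Fin.cons 0 v
  map_add' x y := by
    ext i; refine Fin.cases ?_ ?_ i <;> simp
  map_smul' c x := by
    ext i; refine Fin.cases ?_ ?_ i <;> simp

/-- If `P` is a real submodule of `R^n`, then `ι⁻¹(P)` is a real submodule of `R^(n-1)`,
where `ι` embeds into the last `n − 1` coordinates. -/
theorem stmt8 {R : Type*} [CommRing R] {n : ℕ} (P : Submodule R (Fin (n + 1) → R))
    (hP : IsRealSubmodule P) :
    IsRealSubmodule (Submodule.comap (iotaL (R := R)) P) := by
  intro K m hm i
  set φ := TensorProduct.map (iotaL (R := R) (n := n)) (iotaL (R := R) (n := n))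
  have key : φ (∑ j, m j ⊗ₜ[R] m j) ∈ tensMN (P : Set (Fin (n + 1) → R)) := by
    have hmap : Submodule.map φ (tensMN ((Submodule.comap (iotaL (R := R)) P : Submodule R (Fin n → R)) : Set (Fin n → R))) ≤ tensMN (P : Set (Fin (n + 1) → R)) := by
      rw [tensMN, Submodule.map_span, Submodule.span_le]
      rintro x ⟨y, hy, rfl⟩
      rcases hy with ⟨a, b, hb, rfl⟩ | ⟨b, hb, a, rfl⟩
      · apply Submodule.subset_span
        exact Or.inl ⟨iotaL a, iotaL b, hb, by simp [φ]⟩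
      · apply Submodule.subset_span
        exact Or.inr ⟨iotaL b, hb, iotaL a, by simp [φ]⟩
    exact hmap ⟨_, hm, rfl⟩
  have hsum : φ (∑ j, m j ⊗ₜ[R] m j) = ∑ j, (iotaL (m j)) ⊗ₜ[R] (iotaL (m j)) := by
    simp [φ]
  rw [hsum] at key
  exact hP K (fun j => iotaL (m j)) key i
end

section
/- Let R be a commutative ring, M = R^n, f ∈ M, and I an ideal of R. If f^(2t) := (fⱼ^(2tⱼ)) satisfies fⱼ^(2tⱼ) + Σᵢ sᵢⱼ² ∈ I for each j (some tⱼ ∈ ℕ, sᵢⱼ ∈ R), then fⱼ^(tⱼ)·f belongs to the real radical of the submodule I·f for every j. Consequently, for t large enough, (Σⱼ R fⱼ)ᵗ · f ⊆ rr(I·f). -/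
open TensorProduct

/-
Multiplying `c² + Σᵢ sᵢ² ∈ I` by `f ⊗ f` gives `c f ⊗ c f + Σᵢ sᵢ f ⊗ sᵢ f ∈ I (f ⊗ f) ⊆ M ⊗ If + If ⊗ M`,
so every real submodule containing `I f` contains `c f`; taking `c = fⱼ^tⱼ` gives the first claim.
Hence every `fⱼ` lies in the radical of the ideal `{a | a f ∈ rr(I f)}`, and since `Σⱼ R fⱼ` is
finitely generated, a power of it lies in that ideal.
-/

section RealSubmodule

variable {R : Type*} [CommRing R] {n : ℕ}

theorem tmul_mem_tensMN_of_mem_left {S : Set (Fin n → R)} {b : Fin n → R} (hb : b ∈ S)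
    (a : Fin n → R) : b ⊗ₜ[R] a ∈ tensMN S :=
  Submodule.subset_span (Or.inr ⟨b, hb, a, rfl⟩)

theorem sum_tmul_self_cons_smul_eq (f : Fin n → R) (c : R) {L : ℕ} (s : Fin L → R) :
    ∑ i : Fin (L + 1), (Fin.cons (c • f) (fun i => s i • f) : Fin (L + 1) → Fin n → R) i ⊗ₜ[R]
        (Fin.cons (c • f) (fun i => s i • f) : Fin (L + 1) → Fin n → R) i =
      (c ^ 2 + ∑ i, s i ^ 2) • (f ⊗ₜ[R] f) := by
  simp only [Fin.sum_univ_succ, Fin.cons_zero, Fin.cons_succ, smul_tmul_smul, add_smul,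
    Finset.sum_smul, sq]

theorem IsRealSubmodule.smul_mem_of_sq_add_sum_sq_smul_mem {P : Submodule R (Fin n → R)}
    (hP : IsRealSubmodule P) {f : Fin n → R} {c : R} {L : ℕ} {s : Fin L → R}
    (h : (c ^ 2 + ∑ i, s i ^ 2) • f ∈ P) : c • f ∈ P := by
  have hsum := tmul_mem_tensMN_of_mem_left h f
  rw [← smul_tmul', ← sum_tmul_self_cons_smul_eq] at hsum
  exact hP (L + 1) _ hsum 0

theorem smul_mem_realRadicalSub_of_sq_add_sum_sq_mem {I : Ideal R} {f : Fin n → R} {c : R}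
    {L : ℕ} {s : Fin L → R} (h : c ^ 2 + ∑ i, s i ^ 2 ∈ I) :
    c • f ∈ realRadicalSub (Submodule.map (LinearMap.toSpanSingleton R (Fin n → R) f) I) := by
  rw [realRadicalSub, Submodule.mem_sInf]
  rintro P ⟨hP, hle⟩
  exact hP.smul_mem_of_sq_add_sum_sq_smul_mem (hle ⟨_, h, rfl⟩)

end RealSubmodule

/-- If `fⱼ^(2tⱼ) + Σᵢ sᵢⱼ² ∈ I` for each `j`, then `fⱼ^(tⱼ)·f ∈ rr(I·f)` for every `j`;
consequently, for `t` large enough, `(Σⱼ R fⱼ)ᵗ · f ⊆ rr(I·f)`. -/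
theorem stmt10 {R : Type*} [CommRing R] {n : ℕ} (f : Fin n → R) (I : Ideal R)
    (t : Fin n → ℕ) (L : ℕ) (s : Fin n → Fin L → R)
    (hI : ∀ j, f j ^ (2 * t j) + ∑ i, s j i ^ 2 ∈ I) :
    (∀ j, (f j ^ t j) • f ∈ realRadicalSub
        (Submodule.map (LinearMap.toSpanSingleton R (Fin n → R) f) I)) ∧
    ∃ T : ℕ, ∀ t' ≥ T, ∀ a ∈ (Ideal.span (Set.range f)) ^ t',
      a • f ∈ realRadicalSub
        (Submodule.map (LinearMap.toSpanSingleton R (Fin n → R) f) I) := by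
  set N := Submodule.map (LinearMap.toSpanSingleton R (Fin n → R) f) I
  have hpow (j : Fin n) : (f j ^ t j) • f ∈ realRadicalSub N :=
    smul_mem_realRadicalSub_of_sq_add_sum_sq_mem (s := s j) (pow_mul' (f j) 2 (t j) ▸ hI j)
  refine ⟨hpow, ?_⟩
  have hrad : Ideal.span (Set.range f) ≤
      Ideal.radical ((realRadicalSub N).comap (LinearMap.toSpanSingleton R (Fin n → R) f)) := by
    rw [Ideal.span_le]
    rintro _ ⟨j, rfl⟩
    exact ⟨t j, hpow j⟩
  obtain ⟨T, hT⟩ :=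
    Ideal.exists_pow_le_of_le_radical_of_fg hrad (Submodule.fg_span (Set.finite_range f))
  exact ⟨T, fun t' ht' a ha => hT (Ideal.pow_le_pow_right ht' ha)⟩
end

section
/- In R² with R = ℝ[x₁, x₂], set g₁ = (x₁, x₁ + x₂), g₂ = (−x₁, x₁ − x₂), f = (x₁, 0). Then f ⊗ f = r₁ ⊗ g₁ + g₁ ⊗ r₁ + r₂ ⊗ g₂ + g₂ ⊗ r₂ where r₁ = ((x₁ − x₂)/4, 0) and r₂ = ((−x₁ − x₂)/4, 0); hence f belongs to the real radical of the submodule Rg₁ + Rg₂, although f is not an R-linear combination of g₁ and g₂. -/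
open TensorProduct

lemma decomp2 {R : Type*} [CommRing R] (a : Fin 2 → R) :
    a = a 0 • (Pi.single 0 1 : Fin 2 → R) + a 1 • (Pi.single 1 1 : Fin 2 → R) := by
  funext i; fin_cases i <;> simp

lemma tmul_expand {R : Type*} [CommRing R] (a b : Fin 2 → R) :
    a ⊗ₜ[R] b = (a 0 * b 0) • ((Pi.single 0 1 : Fin 2 → R) ⊗ₜ[R] (Pi.single 0 1 : Fin 2 → R))
      + (a 0 * b 1) • ((Pi.single 0 1 : Fin 2 → R) ⊗ₜ[R] (Pi.single 1 1 : Fin 2 → R))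
      + (a 1 * b 0) • ((Pi.single 1 1 : Fin 2 → R) ⊗ₜ[R] (Pi.single 0 1 : Fin 2 → R))
      + (a 1 * b 1) • ((Pi.single 1 1 : Fin 2 → R) ⊗ₜ[R] (Pi.single 1 1 : Fin 2 → R)) := by
  conv_lhs => rw [decomp2 a, decomp2 b]
  simp only [tmul_add, add_tmul, smul_tmul, TensorProduct.smul_tmul', smul_smul]
  abel

open MvPolynomial in
/-- The example: in `R²` with `R = ℝ[x₁,x₂]`, `f = (x₁, 0)` satisfies
`f ⊗ f = r₁ ⊗ g₁ + g₁ ⊗ r₁ + r₂ ⊗ g₂ + g₂ ⊗ r₂`, hence lies in the real radical of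
`Rg₁ + Rg₂`, yet is not an `R`-linear combination of `g₁`, `g₂`. -/
theorem stmt12 :
    let R := MvPolynomial (Fin 2) ℝ
    let g₁ : Fin 2 → R := ![X 0, X 0 + X 1]
    let g₂ : Fin 2 → R := ![-X 0, X 0 - X 1]
    let f : Fin 2 → R := ![X 0, 0]
    let r₁ : Fin 2 → R := ![C (1/4 : ℝ) * (X 0 - X 1), 0]
    let r₂ : Fin 2 → R := ![C (1/4 : ℝ) * (-X 0 - X 1), 0]
    f ⊗ₜ[R] f = r₁ ⊗ₜ[R] g₁ + g₁ ⊗ₜ[R] r₁ + r₂ ⊗ₜ[R] g₂ + g₂ ⊗ₜ[R] r₂ ∧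
    f ∈ realRadicalSub (Submodule.span R {g₁, g₂}) ∧
    ¬ ∃ a b : R, f = a • g₁ + b • g₂ := by
  intro R g₁ g₂ f r₁ r₂
  have h4 : (C (1/4 : ℝ) : R) * 4 = 1 := by
    have : (4 : R) = C (4 : ℝ) := by simp [map_ofNat]
    rw [this, ← C_mul]; norm_num
  have e1 : f ⊗ₜ[R] f = r₁ ⊗ₜ[R] g₁ + g₁ ⊗ₜ[R] r₁ + r₂ ⊗ₜ[R] g₂ + g₂ ⊗ₜ[R] r₂ := by
    rw [tmul_expand f f, tmul_expand r₁ g₁, tmul_expand g₁ r₁, tmul_expand r₂ g₂,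
      tmul_expand g₂ r₂]
    simp only [g₁, g₂, f, r₁, r₂, Matrix.cons_val_zero, Matrix.cons_val_one, Matrix.head_cons]
    match_scalars
    · linear_combination (-(X 0 * X 0)) * h4
    · ring
    · ring
    · ring
  refine ⟨e1, ?_, ?_⟩
  · simp only [realRadicalSub, Submodule.mem_sInf]
    rintro P ⟨hreal, hle⟩
    have hg₁ : g₁ ∈ P := hle (Submodule.subset_span (by simp))
    have hg₂ : g₂ ∈ P := hle (Submodule.subset_span (by simp))
    refine hreal 1 (fun _ => f) ?_ 0
    rw [Fin.sum_univ_one, e1]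
    have mem₁ : r₁ ⊗ₜ[R] g₁ ∈ tensMN (P : Set (Fin 2 → R)) :=
      Submodule.subset_span (Set.mem_union_left _ ⟨r₁, g₁, hg₁, rfl⟩)
    have mem₂ : g₁ ⊗ₜ[R] r₁ ∈ tensMN (P : Set (Fin 2 → R)) :=
      Submodule.subset_span (Set.mem_union_right _ ⟨g₁, hg₁, r₁, rfl⟩)
    have mem₃ : r₂ ⊗ₜ[R] g₂ ∈ tensMN (P : Set (Fin 2 → R)) :=
      Submodule.subset_span (Set.mem_union_left _ ⟨r₂, g₂, hg₂, rfl⟩)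
    have mem₄ : g₂ ⊗ₜ[R] r₂ ∈ tensMN (P : Set (Fin 2 → R)) :=
      Submodule.subset_span (Set.mem_union_right _ ⟨g₂, hg₂, r₂, rfl⟩)
    exact add_mem (add_mem (add_mem mem₁ mem₂) mem₃) mem₄
  · rintro ⟨a, b, hab⟩
    have h0 := congrFun hab 0
    have h1 := congrFun hab 1
    simp only [g₁, g₂, f, Pi.add_apply, Pi.smul_apply, smul_eq_mul, Matrix.cons_val_zero,
      Matrix.cons_val_one, Matrix.head_cons] at h0 h1
    have hd : a - b = 1 := by
      have hz : (a - b - 1) * X 0 = 0 := by linear_combination -h0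
      rcases mul_eq_zero.mp hz with h | h
      · linear_combination h
      · exact absurd h (X_ne_zero 0)
    have h2 : (a + b) * X 0 + X 1 = 0 := by linear_combination -h1 - X 1 * hd
    have := congrArg (eval ![(0:ℝ), 1]) h2
    simp at this
end

section
/- In R² with R = ℝ[x₁, x₂], the vector f = (x₁, 0) vanishes against every pair (a, u) ∈ ℝ² × ℝ² that annihilates g₁ = (x₁, x₁ + x₂) and g₂ = (−x₁, x₁ − x₂): that is, if g₁(a)·u = 0 and g₂(a)·u = 0 (dot products after evaluating at a) then f(a)·u = 0. Yet f is not an R-linear combination of g₁ and g₂. -/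
open MvPolynomial in
/-- In `R²` with `R = ℝ[x₁,x₂]`, `f = (x₁, 0)` vanishes against every pair `(a, u)`
annihilating `g₁ = (x₁, x₁+x₂)` and `g₂ = (−x₁, x₁−x₂)`, yet `f` is not an
`R`-linear combination of `g₁` and `g₂`. -/
theorem stmt13 :
    let R := MvPolynomial (Fin 2) ℝ
    let g₁ : Fin 2 → R := ![X 0, X 0 + X 1]
    let g₂ : Fin 2 → R := ![-X 0, X 0 - X 1]
    let f : Fin 2 → R := ![X 0, 0]
    (∀ (a u : Fin 2 → ℝ),
        (∑ j, eval a (g₁ j) * u j = 0) → (∑ j, eval a (g₂ j) * u j = 0) →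
        ∑ j, eval a (f j) * u j = 0) ∧
    ¬ ∃ p q : R, f = p • g₁ + q • g₂ := by
  constructor
  · intro a u h1 h2
    simp only [Fin.sum_univ_two, Matrix.cons_val_zero, Matrix.cons_val_one, Matrix.head_cons,
      map_add, map_neg, map_sub, eval_X, map_zero, zero_mul, add_zero, neg_mul] at h1 h2 ⊢
    rcases eq_or_ne (a 0) 0 with h | h
    · simp [h]
    · have hu : u 1 = 0 := by
        have h3 : a 0 * u 1 = 0 := by linarith
        exact (mul_eq_zero.mp h3).resolve_left h
      rw [hu] at h1
      linarith
  · rintro ⟨p, q, h⟩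
    have h0 := congrFun h 0
    have h1 := congrFun h 1
    simp only [Pi.add_apply, Pi.smul_apply, smul_eq_mul, Matrix.cons_val_zero,
      Matrix.cons_val_one, Matrix.head_cons] at h0 h1
    have hpq : p - q = 1 := by
      have hx : (X 0 : MvPolynomial (Fin 2) ℝ) ≠ 0 := X_ne_zero 0
      have h4 : (p - q) * X 0 = 1 * X 0 := by linear_combination -h0
      exact mul_right_cancel₀ hx h4
    have h5 := congrArg (eval (![0,1] : Fin 2 → ℝ)) h1
    have h6 := congrArg (eval (![0,1] : Fin 2 → ℝ)) hpq
    simp only [map_add, map_mul, map_sub, map_neg, map_one, map_zero, eval_X,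
      Matrix.cons_val_zero, Matrix.cons_val_one, Matrix.head_cons] at h5 h6
    nlinarith [h5, h6]
end

section
/- Let R be a commutative ring, A = Mₙ(R), J a left ideal of A, and N ⊆ R^n the submodule of all rows of elements of J. Then J is a real left ideal (i.e., H₁ᵀH₁ + ⋯ + H_kᵀH_k ∈ J + Jᵀ implies H₁,…,H_k ∈ J) if and only if N is a real submodule of R^n (i.e., Σᵢ mᵢ ⊗ mᵢ ∈ M ⊗ N + N ⊗ M implies all mᵢ ∈ N, where M = R^n). -/
open TensorProduct

open Matrix

section AuxStmt15
variable {R : Type*} [CommRing R] {n : ℕ}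


noncomputable def phiAux : (Fin n → R) ⊗[R] (Fin n → R) →ₗ[R] Matrix (Fin n) (Fin n) R :=
  TensorProduct.lift <| LinearMap.mk₂ R Matrix.vecMulVec
    (fun a a' b => by ext i j; simp [Matrix.vecMulVec_apply, add_mul])
    (fun c a b => by ext i j; simp [Matrix.vecMulVec_apply, smul_eq_mul, mul_assoc])
    (fun a b b' => by ext i j; simp [Matrix.vecMulVec_apply, mul_add])
    (fun c a b => by ext i j; simp [Matrix.vecMulVec_apply, smul_eq_mul, mul_left_comm])

@[simp] lemma phiAux_tmul (a b : Fin n → R) : phiAux (a ⊗ₜ[R] b) = Matrix.vecMulVec a b := rfl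

noncomputable def psiAux : Matrix (Fin n) (Fin n) R →ₗ[R] (Fin n → R) ⊗[R] (Fin n → R) where
  toFun G := ∑ r, Pi.single r (1 : R) ⊗ₜ[R] G r
  map_add' G G' := by
    show (∑ r, Pi.single r (1:R) ⊗ₜ[R] (G r + G' r)) = _
    simp [tmul_add, Finset.sum_add_distrib]
  map_smul' c G := by
    show (∑ r, Pi.single r (1:R) ⊗ₜ[R] (c • G r)) = _
    simp [tmul_smul, Finset.smul_sum]

lemma phi_psi (G : Matrix (Fin n) (Fin n) R) : phiAux (psiAux G) = G := by
  show phiAux (∑ r, Pi.single r (1:R) ⊗ₜ[R] G r) = G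
  rw [map_sum]
  ext i j
  simp [Matrix.sum_apply, Matrix.vecMulVec_apply, Pi.single_apply]

lemma psi_phi (x : (Fin n → R) ⊗[R] (Fin n → R)) : psiAux (phiAux x) = x := by
  have : (psiAux ∘ₗ phiAux : (Fin n → R) ⊗[R] (Fin n → R) →ₗ[R] _) = LinearMap.id := by
    apply TensorProduct.ext'
    intro a b
    show psiAux (Matrix.vecMulVec a b) = a ⊗ₜ[R] b
    show (∑ r, Pi.single r (1:R) ⊗ₜ[R] (Matrix.vecMulVec a b) r) = a ⊗ₜ[R] b
    have h1 : ∀ r : Fin n, (Matrix.vecMulVec a b) r = a r • b := by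
      intro r; funext j; simp [Matrix.vecMulVec_apply]
    calc (∑ r, Pi.single r (1:R) ⊗ₜ[R] (Matrix.vecMulVec a b) r)
        = ∑ r, (Pi.single r (a r)) ⊗ₜ[R] b := by
          refine Finset.sum_congr rfl fun r _ => ?_
          rw [h1, tmul_smul, smul_tmul', ← Pi.single_smul, smul_eq_mul, mul_one]
      _ = (∑ r, Pi.single r (a r)) ⊗ₜ[R] b := by rw [sum_tmul]
      _ = a ⊗ₜ[R] b := by rw [Finset.univ_sum_single]
  exact LinearMap.congr_fun this x

lemma phi_injective : Function.Injective (phiAux (R := R) (n := n)) := by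
  intro x y h
  have := congrArg psiAux h
  rwa [psi_phi, psi_phi] at this

lemma transpose_mul_self_eq (G : Matrix (Fin n) (Fin n) R) :
    Gᵀ * G = ∑ r, Matrix.vecMulVec (G r) (G r) := by
  ext i j
  simp [Matrix.mul_apply, Matrix.sum_apply, Matrix.vecMulVec_apply, Matrix.transpose_apply]

lemma psi_transpose (b : Matrix (Fin n) (Fin n) R) :
    psiAux bᵀ = ∑ r, (b r) ⊗ₜ[R] Pi.single r (1 : R) := by
  apply phi_injective
  rw [phi_psi, map_sum]
  ext i j
  simp [Matrix.sum_apply, Matrix.vecMulVec_apply, Pi.single_apply, Matrix.transpose_apply]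

end AuxStmt15

/-- A left ideal `J` of `Mₙ(R)` is *real* if `H₁ᵀH₁ + ⋯ + H_kᵀH_k ∈ J + Jᵀ` implies
all `Hᵢ ∈ J`. -/
def IsRealLeftIdeal {R : Type*} [CommRing R] {n : ℕ}
    (J : Submodule (Matrix (Fin n) (Fin n) R) (Matrix (Fin n) (Fin n) R)) : Prop :=
  ∀ (k : ℕ) (H : Fin k → Matrix (Fin n) (Fin n) R),
    (∑ i, (H i)ᵀ * H i) ∈ {x | ∃ a ∈ J, ∃ b ∈ J, x = a + bᵀ} → ∀ i, H i ∈ J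

/-- A left ideal `J` of `Mₙ(R)` whose matrices are exactly those with all rows in a
submodule `N ≤ R^n` is real if and only if `N` is a real submodule. -/
theorem stmt15 {R : Type*} [CommRing R] {n : ℕ}
    (J : Submodule (Matrix (Fin n) (Fin n) R) (Matrix (Fin n) (Fin n) R))
    (N : Submodule R (Fin n → R))
    (hrows : (N : Set (Fin n → R)) = {v | ∃ G ∈ J, ∃ i : Fin n, v = fun j => G i j})
    (hJ : ∀ G : Matrix (Fin n) (Fin n) R, G ∈ J ↔ ∀ i, (fun j => G i j) ∈ N) :
    IsRealLeftIdeal J ↔ IsRealSubmodule N := by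
  classical
  set trLM : Matrix (Fin n) (Fin n) R →ₗ[R] Matrix (Fin n) (Fin n) R :=
    { toFun := Matrix.transpose,
      map_add' := fun _ _ => Matrix.transpose_add _ _,
      map_smul' := fun _ _ => Matrix.transpose_smul _ _ } with htr
  set E : Submodule R (Matrix (Fin n) (Fin n) R) :=
    Submodule.restrictScalars R J ⊔ (Submodule.restrictScalars R J).map trLM with hE
  -- phiAux maps tensMN into E
  have hphiE : ∀ x ∈ tensMN (N : Set (Fin n → R)), phiAux x ∈ E := by
    have hle : tensMN (N : Set (Fin n → R)) ≤ E.comap phiAux := by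
      rw [tensMN, Submodule.span_le]
      rintro x (⟨a, b, hb, rfl⟩ | ⟨b, hb, a, rfl⟩)
      · refine Submodule.mem_sup_left ?_
        show Matrix.vecMulVec a b ∈ J
        rw [hJ]
        intro i
        have : (fun j => Matrix.vecMulVec a b i j) = a i • b := by
          funext j; simp [Matrix.vecMulVec_apply]
        rw [this]; exact N.smul_mem _ hb
      · refine Submodule.mem_sup_right ?_
        refine ⟨Matrix.vecMulVec a b, ?_, ?_⟩
        · show Matrix.vecMulVec a b ∈ J
          rw [hJ]
          intro i
          have : (fun j => Matrix.vecMulVec a b i j) = a i • b := by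
            funext j; simp [Matrix.vecMulVec_apply]
          rw [this]; exact N.smul_mem _ hb
        · show (Matrix.vecMulVec a b)ᵀ = phiAux (b ⊗ₜ[R] a)
          ext i j
          simp [Matrix.vecMulVec_apply, Matrix.transpose_apply, mul_comm]
    exact fun x hx => hle hx
  -- psiAux maps E into tensMN
  have hpsiE : ∀ x ∈ E, psiAux x ∈ tensMN (N : Set (Fin n → R)) := by
    intro x hx
    rcases Submodule.mem_sup.mp hx with ⟨y, hy, z, hz, rfl⟩
    rcases hz with ⟨w, hw, rfl⟩
    rw [map_add]
    refine Submodule.add_mem _ ?_ ?_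
    · show (∑ r, Pi.single r (1:R) ⊗ₜ[R] y r) ∈ _
      refine Submodule.sum_mem _ fun r _ => Submodule.subset_span ?_
      exact Or.inl ⟨Pi.single r 1, y r, (hJ y).mp hy r, rfl⟩
    · show psiAux wᵀ ∈ _
      rw [psi_transpose]
      refine Submodule.sum_mem _ fun r _ => Submodule.subset_span ?_
      exact Or.inr ⟨w r, (hJ w).mp hw r, Pi.single r 1, rfl⟩
  constructor
  · intro hreal K m hm i
    rcases Nat.eq_zero_or_pos n with h0 | hpos
    · subst h0
      have : m i = 0 := funext fun j => j.elim0
      rw [this]; exact N.zero_mem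
    · haveI : NeZero n := ⟨hpos.ne'⟩
      set H : Fin K → Matrix (Fin n) (Fin n) R :=
        fun i => Matrix.vecMulVec (Pi.single (0 : Fin n) 1) (m i) with hH
      have key : ∀ i, (H i)ᵀ * H i = Matrix.vecMulVec (m i) (m i) := by
        intro i; ext a b
        simp [hH, Matrix.mul_apply, Matrix.vecMulVec_apply, Matrix.transpose_apply,
          Pi.single_apply, ite_mul, mul_ite, mul_comm, mul_left_comm]
      have hsum : (∑ i, (H i)ᵀ * H i) = phiAux (∑ i, m i ⊗ₜ[R] m i) := by
        rw [map_sum]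
        exact Finset.sum_congr rfl fun i _ => by rw [key, phiAux_tmul]
      have hin : (∑ i, (H i)ᵀ * H i) ∈ E := by
        rw [hsum]; exact hphiE _ hm
      have hset : (∑ i, (H i)ᵀ * H i) ∈ {x | ∃ a ∈ J, ∃ b ∈ J, x = a + bᵀ} := by
        rcases Submodule.mem_sup.mp hin with ⟨y, hy, z, hz, hxyz⟩
        rcases hz with ⟨w, hw, rfl⟩
        exact ⟨y, hy, w, hw, hxyz.symm⟩
      have hHi := hreal K H hset i
      have := (hJ (H i)).mp hHi 0
      have heq : (fun j => H i 0 j) = m i := by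
        funext j; simp [hH, Matrix.vecMulVec_apply, Pi.single_eq_same]
      rwa [heq] at this
  · intro hN k H hmem i
    rw [hJ]
    intro r
    have hE' : (∑ i, (H i)ᵀ * H i) ∈ E := by
      rcases hmem with ⟨a, ha, b, hb, heq⟩
      rw [heq]
      exact Submodule.add_mem _ (Submodule.mem_sup_left ha)
        (Submodule.mem_sup_right ⟨b, hb, rfl⟩)
    have hpsi := hpsiE _ hE'
    have hsum : psiAux (∑ i, (H i)ᵀ * H i) = ∑ i, ∑ s, (H i s) ⊗ₜ[R] (H i s) := by
      rw [map_sum]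
      refine Finset.sum_congr rfl fun i _ => ?_
      rw [transpose_mul_self_eq, map_sum]
      exact Finset.sum_congr rfl fun s _ => by rw [← phiAux_tmul, psi_phi]
    set e : Fin k × Fin n ≃ Fin (k * n) := finProdFinEquiv with he
    set mm : Fin (k * n) → (Fin n → R) := fun p => H (e.symm p).1 (e.symm p).2 with hmm
    have hmem' : (∑ p, mm p ⊗ₜ[R] mm p) ∈ tensMN (N : Set (Fin n → R)) := by
      have h1 : (∑ p, mm p ⊗ₜ[R] mm p) = ∑ q : Fin k × Fin n, mm (e q) ⊗ₜ[R] mm (e q) :=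
        (Equiv.sum_comp e _).symm
      have h2 : ∀ q : Fin k × Fin n, mm (e q) = H q.1 q.2 := fun q => by
        simp [hmm]
      rw [h1]
      simp only [h2]
      rw [Fintype.sum_prod_type, ← hsum]
      exact hpsi
    have := hN (k * n) mm hmem' (e (i, r))
    simpa [hmm] using this
end
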